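/- arXiv:math/0411130 — 3 statements merged into one kernel-verified Lean document; each statement's English description precedes it below -/
import Mathlib

section
/- Let t(y) = p⁻¹ + Σ_{i≥1} H_i p^i and t(z) = q⁻¹ + Σ_{i≥1} H_i q^i be two copies of the same formal Laurent series in variables p, q. Define the double series Σ_{m,n≥1} H_{m,n} p^n q^m as the expansion of Σ_{i≥1}(1/i)(p/q)^i − log((p⁻¹ − q⁻¹ + Σ_{i≥1} H_i(p^i − q^i))/(p⁻¹ − q⁻¹)) (equivalently, of −log p − log(t(y)−t(z)) after removing the divergent part). Then H_{m,n} = H_{n,m} for all positive integers m, n. -/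
open MvPowerSeries

/-- Abbreviations for the two variables `p`, `q` of our two-variable power
series: `X0` plays the role of `p` and `X1` that of `q`. -/
noncomputable def X0 : MvPowerSeries (Fin 2) ℚ := MvPowerSeries.X 0
noncomputable def X1 : MvPowerSeries (Fin 2) ℚ := MvPowerSeries.X 1

/-- The coefficient of `p^n q^m` in `−log(1−u) = Σ_{k≥1} u^k/k`.  Since `u`
(below) has vanishing terms in total degree `< 2`, only `k ≤ m+n` contribute,
so the sum may be truncated.  This is the double coefficient `H_{m,n}` of the
expansion `Σ_{i≥1}(1/i)(p/q)^i − log((p⁻¹−q⁻¹+Σ H_i(p^i−q^i))/(p⁻¹−q⁻¹))`,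
i.e. of `−log p − log(t(y)−t(z))` with the divergent part removed. -/
noncomputable def doubleCoeff (u : MvPowerSeries (Fin 2) ℚ) (m n : ℕ) : ℚ :=
  ∑ k ∈ Finset.Icc 1 (m + n),
    (1 / k : ℚ) *
      MvPowerSeries.coeff (Finsupp.single 0 n + Finsupp.single 1 m) (u ^ k)

/-!
Put `P = (q − p)(1 − u)`. The hypothesis makes `P` antisymmetric under `p ↔ q`. So is
`q − p`, and since power series over `ℚ` form a domain, `q − p` cancels: `u` is symmetric
in `p, q`. Then so is every `u ^ k`, and `doubleCoeff u m n` is built from the coefficients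
of the `u ^ k` at `p^n q^m`.
-/

namespace MvPowerSeries

theorem coeff_rename_equiv {σ τ R : Type*} [CommSemiring R] (e : σ ≃ τ)
    (p : MvPowerSeries σ R) (x : τ →₀ ℕ) :
    coeff x (rename e p) = coeff (x.equivMapDomain e.symm) p := by
  have hx : x = Finsupp.embDomain e.toEmbedding (x.equivMapDomain e.symm) := by
    ext t
    simp [Finsupp.embDomain_eq_mapDomain, ← Finsupp.equivMapDomain_eq_mapDomain]
  conv_lhs => rw [hx]
  exact coeff_embDomain_rename e.toEmbedding p _

theorem coeff_equivMapDomain_of_rename_eq {σ R : Type*} [CommSemiring R] {e : σ ≃ σ}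
    {p : MvPowerSeries σ R} (h : rename e p = p) (x : σ →₀ ℕ) :
    coeff (x.equivMapDomain e.symm) p = coeff x p := by
  conv_rhs => rw [← h, coeff_rename_equiv]

theorem rename_swap_eq_of_rename_swap_mul_eq_neg {σ R : Type*} [DecidableEq σ] [CommRing R]
    [IsDomain R] {i j : σ} (hij : i ≠ j) {v : MvPowerSeries σ R}
    (h : rename (Equiv.swap i j) ((X j - X i) * v) = -((X j - X i) * v)) :
    rename (Equiv.swap i j) v = v := by
  rw [map_mul, map_sub, rename_X, rename_X, Equiv.swap_apply_left,
    Equiv.swap_apply_right] at h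
  have hX : (X j - X i : MvPowerSeries σ R) ≠ 0 := sub_ne_zero.mpr (X_inj.not.mpr hij.symm)
  exact mul_left_cancel₀ hX (by linear_combination -h)

end MvPowerSeries

open Finsupp in
theorem doubleCoeff_comm_of_rename_swap_eq {u : MvPowerSeries (Fin 2) ℚ}
    (h : rename (Equiv.swap 0 1) u = u) (m n : ℕ) : doubleCoeff u m n = doubleCoeff u n m := by
  unfold doubleCoeff
  rw [add_comm n m]
  refine Finset.sum_congr rfl fun k _ => congrArg _ ?_
  rw [← coeff_equivMapDomain_of_rename_eq (by rw [map_pow, h])]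
  simp [equivMapDomain_eq_mapDomain, mapDomain_add, add_comm]

/-- **Symmetry `H_{m,n} = H_{n,m}` of the double coefficients.**
Let `t = q⁻¹ + Σ_{i≥1} H_i q^i` (formally, in the variables `p` and `q`).  Let
`u` be the power series with
`(q − p)(1 − u) = (q − p) + Σ_{i≥1} H_i (p^i q − q^i p)`, i.e.
`1 − u = (p⁻¹ − q⁻¹ + Σ_{i≥1} H_i (p^i − q^i))/(p⁻¹ − q⁻¹)` after multiplying
numerator and denominator by `pq`.  (The right-hand side series has coefficient
`H_a` on `p^a q` for `a ≥ 2`, `−H_b` on `p q^b` for `b ≥ 2`, and agrees with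
`q − p` elsewhere.)  Then the coefficients `H_{m,n}` of
`−log p − log(t(y) − t(z))` are symmetric: `H_{m,n} = H_{n,m}` for `m, n ≥ 1`. -/
theorem double_coeff_symm (H : ℕ → ℚ) (u : MvPowerSeries (Fin 2) ℚ)
    (hu : ∀ e : Fin 2 →₀ ℕ,
      MvPowerSeries.coeff e ((X1 - X0) * (1 - u)) =
        MvPowerSeries.coeff e (X1 - X0) +
          (if e 1 = 1 ∧ 2 ≤ e 0 then H (e 0) else 0) -
          (if e 0 = 1 ∧ 2 ≤ e 1 then H (e 1) else 0)) :
    ∀ m n : ℕ, 1 ≤ m → 1 ≤ n → doubleCoeff u m n = doubleCoeff u n m := by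
  have hX : rename (Equiv.swap 0 1) (X1 - X0) = -(X1 - X0) := by
    simp [X0, X1]
  have hanti : rename (Equiv.swap 0 1) ((X1 - X0) * (1 - u)) = -((X1 - X0) * (1 - u)) := by
    ext e
    rw [coeff_rename_equiv, hu, map_neg, hu, ← coeff_rename_equiv, hX]
    simp only [map_neg, Equiv.symm_swap, Finsupp.equivMapDomain_apply, Equiv.swap_apply_left,
      Equiv.swap_apply_right]
    ring
  have hu_symm : rename (Equiv.swap 0 1) u = u := by
    simpa only [map_sub, map_one, sub_right_inj] using
      rename_swap_eq_of_rename_swap_mul_eq_neg (by decide) hanti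
  intro m n _ _
  exact doubleCoeff_comm_of_rename_swap_eq hu_symm m n
end

section
/- Let (a b; c d) ∈ Γ₀(24) and write c = 24c₁. For each i ∈ {1,3}, there exist integers x_i, y_i, z_i such that (4 i; 0 4)·(a b; c d) = (a+ic/4, x_i ; c, y_i)·(4 z_i; 0 4) with (a+ic/4, x_i; c, y_i) ∈ SL₂(Z), and moreover z_i ≡ i + 6c₁d (mod 4). -/
lemma gamma0_24_aux : ∀ a d c i : ZMod 4, a * d = 1 → (i = 1 ∨ i = 3) →
    i * d - (a + 2 * i * c) * (i + 2 * c * d) = 0 := by decide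

/-- For `(a b; c d) ∈ Γ₀(24)` with `c = 24c₁` and `i ∈ {1,3}`, one can factor
`(4 i; 0 4)·(a b; c d) = (a+ic/4, xᵢ; c, yᵢ)·(4 zᵢ; 0 4)` with the middle
factor in `SL₂(ℤ)` and `zᵢ ≡ i + 6c₁d (mod 4)`. -/
theorem gamma0_24_factorization (a b c d c₁ i : ℤ)
    (hdet : a * d - b * c = 1) (hc : c = 24 * c₁) (hi : i = 1 ∨ i = 3) :
    ∃ x y z : ℤ,
      !![(4 : ℤ), i; 0, 4] * !![a, b; c, d] =
        !![a + i * c / 4, x; c, y] * !![4, z; 0, 4] ∧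
      (a + i * c / 4) * y - x * c = 1 ∧
      z % 4 = (i + 6 * c₁ * d) % 4 := by
  subst hc
  have hq : i * (24 * c₁) / 4 = 6 * i * c₁ := by
    rw [show i * (24 * c₁) = 4 * (6 * i * c₁) by ring]
    exact Int.mul_ediv_cancel_left _ (by norm_num)
  have hdvd : (4:ℤ) ∣ (i * d + 4 * b - (a + 6 * i * c₁) * (i + 6 * c₁ * d)) := by
    have h0 : ((i * d + 4 * b - (a + 6 * i * c₁) * (i + 6 * c₁ * d) : ℤ) : ZMod 4) = 0 := by
      have had : (a : ZMod 4) * d = 1 := by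
        have h1 : ((a * d : ℤ) : ZMod 4) = ((1 + 24 * (b * c₁) : ℤ) : ZMod 4) := by
          rw [show a * d = 1 + 24 * (b * c₁) by linear_combination hdet]
        push_cast at h1
        rw [h1]; ring_nf
        rw [show (24 : ZMod 4) = 0 by decide]; ring
      have hi4 : (i : ZMod 4) = 1 ∨ (i : ZMod 4) = 3 := by
        rcases hi with h | h <;> simp [h]
      have := gamma0_24_aux a d c₁ i had hi4
      push_cast
      rw [show (6 : ZMod 4) = 2 by decide, show (4 : ZMod 4) = 0 by decide]
      linear_combination this
    exact (ZMod.intCast_zmod_eq_zero_iff_dvd _ 4).mp h0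
  obtain ⟨x, hx⟩ := hdvd
  refine ⟨x, d - 6 * c₁ * (i + 6 * c₁ * d), i + 6 * c₁ * d, ?_, ?_, rfl⟩
  · ext j k
    fin_cases j <;> fin_cases k <;>
      simp [Matrix.mul_apply, Fin.sum_univ_two, hq] <;>
      first
        | ring1
        | linear_combination hx
  · rw [hq]
    linear_combination hdet + 6 * c₁ * hx
end

section
/- For N = 12 with Hauptmodul t = N(j₁,₁₂), Faber polynomial coefficients H_{m,n}, and the super-replication formula H_{m,2^k} = ψ(2^k·m)·H_{2^k m,1} for odd m coprime to 3 (where ψ(e)=1 if e≡±1 mod 12, −1 otherwise), combined with the twisted 2^k-plication identity H_{m,2^k} = (−1)^{k−1}·(−1/m)·H_{2^k m,1} for odd m (where (−1/m) is the Jacobi symbol): the Fourier coefficients H_l := H_{l,1} of t vanish for all l ≡ 4 mod 6. -/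
lemma pow_two_mod_three (k : ℕ) : 2 ^ k % 3 = if k % 2 = 0 then 1 else 2 := by
  induction k with
  | zero => simp
  | succ n ih =>
    have hstep : 2 ^ (n + 1) % 3 = (2 ^ n % 3) * (2 % 3) % 3 := by
      rw [pow_succ, Nat.mul_mod]
    rw [ih] at hstep
    rcases Nat.even_or_odd n with h | h
    · have hn : n % 2 = 0 := Nat.even_iff.mp h
      have hn1 : (n + 1) % 2 = 1 := by omega
      rw [hn] at hstep; rw [hn1]; simp at hstep ⊢; omega
    · have hn : n % 2 = 1 := Nat.odd_iff.mp h
      have hn1 : (n + 1) % 2 = 0 := by omega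
      rw [hn] at hstep; rw [hn1]; simp at hstep ⊢; omega

/-- **Periodically vanishing coefficients of `N(j_{1,12})`.**
Let `H m n` denote the coefficient `H_{m,n}` of `q^m` in the Faber polynomial
`X_n(t)` of the Hauptmodul `t` of `Γ₁(12)` (so `H l 1 = H_l`).  Assume:
(i) the super-replication formula: for `k ≥ 1` and odd `m` with
`gcd(m,12) = 1`, `H_{m,2^k} = H_{2^k m, 1}` if `m ≡ ±1 (mod 12)` and
`H_{m,2^k} = −H_{2^k m, 1}` if `m ≡ ±5 (mod 12)`;
(ii) the twisted `2^k`-plication identity: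
`H_{m,2^k} = (−1)^{k−1}·(−1/m)·H_{2^k m, 1}` for odd `m`, where
`(−1/m) = (−1)^{(m−1)/2}`.
Then `H_l = H_{l,1} = 0` for all `l ≡ 4 (mod 6)`. -/
theorem fourier_coefficients_vanish_mod_six
    (H : ℕ → ℕ → ℚ)
    (hi : ∀ k m : ℕ, 1 ≤ k → Odd m → Nat.gcd m 12 = 1 →
      ((m % 12 = 1 ∨ m % 12 = 11) → H m (2 ^ k) = H (2 ^ k * m) 1) ∧
      ((m % 12 = 5 ∨ m % 12 = 7) → H m (2 ^ k) = -H (2 ^ k * m) 1))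
    (hii : ∀ k m : ℕ, 1 ≤ k → Odd m →
      H m (2 ^ k) = (-1 : ℚ) ^ (k - 1) * (-1 : ℚ) ^ ((m - 1) / 2) * H (2 ^ k * m) 1) :
    ∀ l : ℕ, l % 6 = 4 → H l 1 = 0 := by
  intro l hl
  have hl0 : l ≠ 0 := by omega
  set k := l.factorization 2 with hkdef
  set m := l / 2 ^ k with hmdef
  have hlm : 2 ^ k * m = l := Nat.ordProj_mul_ordCompl_eq_self l 2
  have hmodd : Odd m := by
    have h2 : ¬ 2 ∣ m := Nat.not_dvd_ordCompl Nat.prime_two hl0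
    exact Nat.odd_iff.mpr (by omega)
  have hm2 : m % 2 = 1 := Nat.odd_iff.mp hmodd
  have hk1 : 1 ≤ k := by
    have h2l : 2 ∣ l := by omega
    exact Nat.Prime.factorization_pos_of_dvd Nat.prime_two hl0 h2l
  have h3 : l % 3 = 1 := by omega
  have hpow := pow_two_mod_three k
  have hmul : (2 ^ k % 3) * (m % 3) % 3 = 1 := by
    rw [← Nat.mul_mod, hlm, h3]
  clear_value k m
  clear hkdef hmdef
  -- determine m % 12 depending on parity of k
  have hii' := hii k m hk1 hmodd
  rcases Nat.even_or_odd k with hke | hko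
  · -- k even : 2^k ≡ 1 mod 3, so m ≡ 1 mod 3, m % 12 ∈ {1, 7}
    have hke' : k % 2 = 0 := Nat.even_iff.mp hke
    rw [hke'] at hpow; simp at hpow
    rw [hpow] at hmul
    have hm3 : m % 3 = 1 := by omega
    have hm12 : m % 12 = 1 ∨ m % 12 = 7 := by omega
    have hgcd : Nat.gcd m 12 = 1 := by
      rw [Nat.gcd_comm, Nat.gcd_rec]
      rcases hm12 with h | h <;> rw [h] <;> decide
    have hi' := hi k m hk1 hmodd hgcd
    have hkodd : Odd (k - 1) := by
      refine Nat.odd_iff.mpr ?_; omega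
    have hk1pow : (-1 : ℚ) ^ (k - 1) = -1 := Odd.neg_one_pow hkodd
    rcases hm12 with h | h
    · -- m ≡ 1 mod 12 : (m-1)/2 even
      have hev : Even ((m - 1) / 2) := Nat.even_iff.mpr (by omega)
      have hmpow : (-1 : ℚ) ^ ((m - 1) / 2) = 1 := Even.neg_one_pow hev
      have e1 := hi'.1 (Or.inl h)
      rw [hii', hk1pow, hmpow, hlm] at e1
      linarith
    · -- m ≡ 7 mod 12 : (m-1)/2 odd
      have hod : Odd ((m - 1) / 2) := Nat.odd_iff.mpr (by omega)
      have hmpow : (-1 : ℚ) ^ ((m - 1) / 2) = -1 := Odd.neg_one_pow hod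
      have e1 := hi'.2 (Or.inr h)
      rw [hii', hk1pow, hmpow, hlm] at e1
      linarith
  · -- k odd : 2^k ≡ 2 mod 3, so m ≡ 2 mod 3, m % 12 ∈ {5, 11}
    have hko' : k % 2 = 1 := Nat.odd_iff.mp hko
    rw [hko'] at hpow; simp at hpow
    rw [hpow] at hmul
    have hm3 : m % 3 = 2 := by omega
    have hm12 : m % 12 = 5 ∨ m % 12 = 11 := by omega
    have hgcd : Nat.gcd m 12 = 1 := by
      rw [Nat.gcd_comm, Nat.gcd_rec]
      rcases hm12 with h | h <;> rw [h] <;> decide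
    have hi' := hi k m hk1 hmodd hgcd
    have hkev : Even (k - 1) := Nat.even_iff.mpr (by omega)
    have hk1pow : (-1 : ℚ) ^ (k - 1) = 1 := Even.neg_one_pow hkev
    rcases hm12 with h | h
    · -- m ≡ 5 mod 12 : (m-1)/2 even
      have hev : Even ((m - 1) / 2) := Nat.even_iff.mpr (by omega)
      have hmpow : (-1 : ℚ) ^ ((m - 1) / 2) = 1 := Even.neg_one_pow hev
      have e1 := hi'.2 (Or.inl h)
      rw [hii', hk1pow, hmpow, hlm] at e1
      linarith
    · -- m ≡ 11 mod 12 : (m-1)/2 odd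
      have hod : Odd ((m - 1) / 2) := Nat.odd_iff.mpr (by omega)
      have hmpow : (-1 : ℚ) ^ ((m - 1) / 2) = -1 := Odd.neg_one_pow hod
      have e1 := hi'.1 (Or.inr h)
      rw [hii', hk1pow, hmpow, hlm] at e1
      linarith
end
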